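/- For the Thue–Morse substitution τ: 0 ↦ 01, 1 ↦ 10, the incidence matrix of τ has characteristic polynomial X(X − 2), while the incidence matrix of the induced length-2 sliding-block-code substitution τ₂ : 1 ↦ 12, 2 ↦ 31, 3 ↦ 34, 4 ↦ 13 (on the alphabet {1,2,3,4} encoding 01, 11, 10, 00) has characteristic polynomial X(X − 1)(X + 1)(X − 2). Hence the converse of the implication 'τ₂ ultimately Pisot ⟹ τ ultimately Pisot' fails for Thue–Morse in the sense that τ is ultimately Pisot while τ₂ is not. -/

import Mathlib

/-!
Every integer `n ≥ 2` is a Pisot number with minimal polynomial `X - n`, so `X(X - 2)` is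
ultimately Pisot. In `X^m · P_θ` every nonzero complex root is a conjugate of `θ`, hence is
either `θ > 1` or has modulus `< 1`; the root `1` of `X(X - 1)(X + 1)(X - 2)` is neither.
-/

/-- A Pisot number: a real algebraic integer greater than 1, all of whose other complex
conjugates have modulus strictly less than 1. -/
def IsPisot (θ : ℝ) : Prop :=
  1 < θ ∧ IsIntegral ℤ θ ∧
    ∀ z : ℂ, ((minpoly ℤ θ).map (Int.castRingHom ℂ)).IsRoot z → z ≠ (θ : ℂ) →
      ‖z‖ < 1

/-- A polynomial over `ℤ` is ultimately Pisot if it equals `X^m · P_θ(X)` for some Pisot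
number `θ` and some `m ≥ 0`. -/
def UltimatelyPisot (p : Polynomial ℤ) : Prop :=
  ∃ (m : ℕ) (θ : ℝ), IsPisot θ ∧ p = Polynomial.X ^ m * minpoly ℤ θ

/-- The incidence matrix of a substitution `τ` (over `ℤ`). -/
def incidence {B : Type*} [Fintype B] [DecidableEq B] (τ : B → List B) : Matrix B B ℤ :=
  Matrix.of fun a b => ((τ a).count b : ℤ)

/-- The Thue–Morse substitution `0 ↦ 01, 1 ↦ 10`. -/
def tmSubst : Fin 2 → List (Fin 2) :=
  fun a => if a = 0 then [0, 1] else [1, 0]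

/-- The induced length-2 sliding-block-code substitution of Thue–Morse,
`1 ↦ 12, 2 ↦ 31, 3 ↦ 34, 4 ↦ 13`, on the alphabet `{1, 2, 3, 4}` (encoded as
`Fin 4 = {0, 1, 2, 3}`) encoding the length-2 factors `01, 11, 10, 00`. -/
def tmSubst2 : Fin 4 → List (Fin 4) :=
  fun a => if a = 0 then [0, 1] else if a = 1 then [2, 0] else if a = 2 then [2, 3] else [0, 2]

open Polynomial

lemma minpoly_int_intCast (n : ℤ) : minpoly ℤ (n : ℝ) = X - C n :=
  minpoly.eq_X_sub_C_of_algebraMap_inj n Int.cast_injective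

lemma isPisot_intCast {n : ℤ} (hn : 1 < n) : IsPisot n := by
  refine ⟨by exact_mod_cast hn, isIntegral_algebraMap (x := n), fun z hz hne => ?_⟩
  rw [minpoly_int_intCast, Polynomial.map_sub, map_X, map_C, IsRoot, eval_sub, eval_X,
    eval_C, sub_eq_zero] at hz
  exact absurd (by simpa using hz) hne

lemma ultimatelyPisot_X_pow_mul_X_sub_C (m : ℕ) {n : ℤ} (hn : 1 < n) :
    UltimatelyPisot (X ^ m * (X - C n)) :=
  ⟨m, n, isPisot_intCast hn, by rw [minpoly_int_intCast]⟩

lemma UltimatelyPisot.norm_ne_one_of_isRoot {p : ℤ[X]} (hp : UltimatelyPisot p) {z : ℂ}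
    (hz : (p.map (Int.castRingHom ℂ)).IsRoot z) : ‖z‖ ≠ 1 := by
  obtain ⟨m, θ, ⟨hθ, -, hconj⟩, rfl⟩ := hp
  intro hz1
  have hz0 : z ≠ 0 := by rintro rfl; simp at hz1
  have hzθ : z ≠ θ := by
    rintro rfl
    rw [Complex.norm_real, Real.norm_of_nonneg (by linarith)] at hz1
    linarith
  rw [Polynomial.map_mul, IsRoot, eval_mul, mul_eq_zero] at hz
  have hmin := hz.resolve_left (by simpa using pow_ne_zero m hz0)
  exact (hconj z hmin hzθ).ne hz1

lemma incidence_tmSubst : incidence tmSubst = !![1, 1; 1, 1] := by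
  ext i j; fin_cases i <;> fin_cases j <;> rfl

lemma incidence_tmSubst2 :
    incidence tmSubst2 = !![1, 1, 0, 0; 1, 0, 1, 0; 0, 0, 1, 1; 1, 0, 1, 0] := by
  ext i j; fin_cases i <;> fin_cases j <;> rfl

lemma charpoly_incidence_tmSubst : (incidence tmSubst).charpoly = X * (X - C 2) := by
  rw [incidence_tmSubst, Matrix.charpoly, Matrix.det_fin_two]
  simp [Matrix.charmatrix_apply_eq, Matrix.charmatrix_apply_ne]
  ring

lemma charpoly_incidence_tmSubst2 :
    (incidence tmSubst2).charpoly = X * (X - C 1) * (X + C 1) * (X - C 2) := by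
  rw [incidence_tmSubst2, Matrix.charpoly, Matrix.det_succ_row_zero]
  simp [Fin.sum_univ_succ, Matrix.det_fin_three, Matrix.charmatrix_apply, Fin.succAbove,
    Matrix.submatrix]
  ring

/-- The incidence matrix of Thue–Morse has characteristic polynomial `X(X - 2)`, an
ultimately Pisot polynomial, while the incidence matrix of its length-2 sliding-block-code
substitution has characteristic polynomial `X(X - 1)(X + 1)(X - 2)`, which is not
ultimately Pisot. Hence the converse of `τ₂ ultimately Pisot ⟹ τ ultimately Pisot` fails. -/
theorem thueMorse_block2_not_ultimately_pisot :
    (incidence tmSubst).charpoly = Polynomial.X * (Polynomial.X - Polynomial.C 2) ∧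
      (incidence tmSubst2).charpoly =
        Polynomial.X * (Polynomial.X - Polynomial.C 1) * (Polynomial.X + Polynomial.C 1) *
          (Polynomial.X - Polynomial.C 2) ∧
      UltimatelyPisot (incidence tmSubst).charpoly ∧
      ¬ UltimatelyPisot (incidence tmSubst2).charpoly := by
  refine ⟨charpoly_incidence_tmSubst, charpoly_incidence_tmSubst2, ?_, fun hp => ?_⟩
  · simpa [charpoly_incidence_tmSubst] using ultimatelyPisot_X_pow_mul_X_sub_C 1 one_lt_two
  · refine hp.norm_ne_one_of_isRoot (z := 1) ?_ norm_one
    simp [charpoly_incidence_tmSubst2]
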